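/- arXiv:2211.08393 — 3 statements merged into one kernel-verified Lean document; each statement's English description precedes it below -/
import Mathlib

section
/- For i.i.d. θ^(1),...,θ^(M) ~ q and positive integrable p, the expected multi-sample objective E[-log((1/M)Σ_{m=1}^M p(θ^(m)))] is non-increasing in M: for all M ≥ 1, E[-log((1/M+1)Σ_{m=1}^{M+1} p(θ^(m)))] ≤ E[-log((1/M)Σ_{m=1}^M p(θ^(m)))]. -/
/-!
The mean of `M + 1` numbers is the average of their `M + 1` leave-one-out means, so by
concavity of `log` (Jensen), `log` of the full mean dominates the average of the `log`s of the
leave-one-out means. Each leave-one-out sample `θ ∘ k.succAbove` of an i.i.d. sample of size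
`M + 1` is an i.i.d. sample of size `M`, so integrating the pointwise inequality gives the claim,
exactly as for the monotonicity of the IWAE bound.
-/

open MeasureTheory Finset

theorem Fin.sum_sum_succAbove {M : Type*} [AddCommGroup M] {n : ℕ} (x : Fin (n + 1) → M) :
    ∑ k : Fin (n + 1), ∑ j, x (k.succAbove j) = n • ∑ i, x i := by
  simp only [fun k => eq_sub_of_add_eq' (Fin.sum_univ_succAbove x k).symm, sum_sub_distrib,
    sum_const, succ_nsmul, add_sub_cancel_right]

theorem ConcaveOn.average_le_map_mean_succAbove {s : Set ℝ} {f : ℝ → ℝ} (hf : ConcaveOn ℝ s f)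
    {n : ℕ} (hn : n ≠ 0) {x : Fin (n + 1) → ℝ} (hx : ∀ i, x i ∈ s) :
    ∑ k : Fin (n + 1), 1 / ((n : ℝ) + 1) * f (1 / (n : ℝ) * ∑ j, x (k.succAbove j))
      ≤ f (1 / ((n : ℝ) + 1) * ∑ i, x i) := by
  have hn' : (n : ℝ) ≠ 0 := Nat.cast_ne_zero.mpr hn
  have hmem : ∀ k : Fin (n + 1), 1 / (n : ℝ) * ∑ j, x (k.succAbove j) ∈ s := fun k => by
    rw [mul_sum]
    exact hf.1.sum_mem (fun _ _ => by positivity) (by simp [hn']) fun j _ => hx _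
  have hmean : ∑ k : Fin (n + 1), 1 / ((n : ℝ) + 1) * (1 / (n : ℝ) * ∑ j, x (k.succAbove j))
      = 1 / ((n : ℝ) + 1) * ∑ i, x i := by
    rw [← mul_sum, ← mul_sum, Fin.sum_sum_succAbove, nsmul_eq_mul]
    field_simp
  have hweights : ∑ _ : Fin (n + 1), 1 / ((n : ℝ) + 1) = 1 := by
    rw [sum_const, card_univ, Fintype.card_fin, nsmul_eq_mul]
    push_cast
    field_simp
  simpa only [smul_eq_mul, hmean] using
    hf.le_map_sum (t := univ) (w := fun _ => 1 / ((n : ℝ) + 1)) (fun _ _ => by positivity)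
      hweights fun k _ => hmem k

theorem measurePreserving_comp_succAbove {n : ℕ} {α : Fin (n + 1) → Type*}
    [∀ i, MeasurableSpace (α i)] (μ : ∀ i, Measure (α i)) [∀ i, IsProbabilityMeasure (μ i)]
    (k : Fin (n + 1)) :
    MeasurePreserving (fun x (j : Fin n) => x (k.succAbove j)) (Measure.pi μ)
      (Measure.pi fun j => μ (k.succAbove j)) :=
  measurePreserving_snd.comp (measurePreserving_piFinSuccAbove μ k)

section LeaveOneOut

variable {α : Type*} [MeasurableSpace α] (μ : Measure α) [IsProbabilityMeasure μ] {n : ℕ}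
  {f : (Fin n → α) → ℝ}

theorem integrable_comp_succAbove (hf : Integrable f (Measure.pi fun _ => μ)) (k : Fin (n + 1)) :
    Integrable (fun x : Fin (n + 1) → α => f (fun j => x (k.succAbove j)))
      (Measure.pi fun _ => μ) :=
  (measurePreserving_comp_succAbove (fun _ => μ) k).integrable_comp_of_integrable hf

theorem integral_comp_succAbove (hf : AEStronglyMeasurable f (Measure.pi fun _ => μ))
    (k : Fin (n + 1)) :
    ∫ x : Fin (n + 1) → α, f (fun j => x (k.succAbove j)) ∂(Measure.pi fun _ => μ)
      = ∫ y, f y ∂(Measure.pi fun _ => μ) := by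
  have hk := measurePreserving_comp_succAbove (fun _ => μ) k
  rw [← integral_map hk.measurable.aemeasurable (hk.map_eq ▸ hf), hk.map_eq]

theorem integrable_average_comp_succAbove (hf : Integrable f (Measure.pi fun _ => μ)) :
    Integrable
      (fun x : Fin (n + 1) → α =>
        ∑ k : Fin (n + 1), 1 / ((n : ℝ) + 1) * f (fun j => x (k.succAbove j)))
      (Measure.pi fun _ => μ) :=
  integrable_finsetSum _ fun k _ => (integrable_comp_succAbove μ hf k).const_mul _

theorem integral_average_comp_succAbove (hf : Integrable f (Measure.pi fun _ => μ)) :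
    ∫ x : Fin (n + 1) → α, ∑ k : Fin (n + 1), 1 / ((n : ℝ) + 1) * f (fun j => x (k.succAbove j))
        ∂(Measure.pi fun _ => μ)
      = ∫ y, f y ∂(Measure.pi fun _ => μ) := by
  rw [integral_finsetSum _ fun k _ => (integrable_comp_succAbove μ hf k).const_mul _]
  simp only [integral_const_mul, integral_comp_succAbove μ hf.1, sum_const, card_univ,
    Fintype.card_fin, nsmul_eq_mul]
  push_cast
  field_simp

end LeaveOneOut

theorem multisample_objective_antitone_general {Θ : Type*} [MeasurableSpace Θ]
    (q : Measure Θ) [IsProbabilityMeasure q] (M : ℕ) (hM : 1 ≤ M)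
    (p : Θ → ℝ) (hpos : ∀ θ, 0 < p θ)
    (hintM : Integrable
      (fun θs : Fin M → Θ => Real.log ((1 / (M : ℝ)) * ∑ m : Fin M, p (θs m)))
      (Measure.pi fun _ : Fin M => q))
    (hintM' : Integrable
      (fun θs : Fin (M + 1) → Θ =>
        Real.log ((1 / ((M : ℝ) + 1)) * ∑ m : Fin (M + 1), p (θs m)))
      (Measure.pi fun _ : Fin (M + 1) => q)) :
    ∫ θs : Fin (M + 1) → Θ, -Real.log ((1 / ((M : ℝ) + 1)) * ∑ m : Fin (M + 1), p (θs m))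
        ∂(Measure.pi fun _ : Fin (M + 1) => q)
      ≤ ∫ θs : Fin M → Θ, -Real.log ((1 / (M : ℝ)) * ∑ m : Fin M, p (θs m))
          ∂(Measure.pi fun _ : Fin M => q) := by
  have hjensen (θs : Fin (M + 1) → Θ) :
      -Real.log ((1 / ((M : ℝ) + 1)) * ∑ m : Fin (M + 1), p (θs m))
        ≤ ∑ k : Fin (M + 1),
            1 / ((M : ℝ) + 1) * -Real.log (1 / (M : ℝ) * ∑ j, p (θs (k.succAbove j))) := by
    simp only [mul_neg, sum_neg_distrib, neg_le_neg_iff]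
    exact strictConcaveOn_log_Ioi.concaveOn.average_le_map_mean_succAbove
      (x := fun i => p (θs i)) (by omega) fun i => hpos (θs i)
  calc _ ≤ ∫ θs : Fin (M + 1) → Θ, ∑ k : Fin (M + 1),
            1 / ((M : ℝ) + 1) * -Real.log (1 / (M : ℝ) * ∑ j, p (θs (k.succAbove j)))
          ∂(Measure.pi fun _ => q) :=
        integral_mono hintM'.neg (integrable_average_comp_succAbove q hintM.neg) hjensen
    _ = _ := integral_average_comp_succAbove q hintM.neg

/-- The expected multi-sample objective `E[-log ((1/M) ∑ₘ p(θ⁽ᵐ⁾))]` is non-increasing in `M`. -/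
theorem multisample_objective_antitone {Θ : Type*} [MeasurableSpace Θ]
    (q : Measure Θ) [IsProbabilityMeasure q] (M : ℕ) (hM : 1 ≤ M)
    (p : Θ → ℝ) (hmeas : Measurable p) (hpos : ∀ θ, 0 < p θ) (hint : Integrable p q)
    (hintM : Integrable
      (fun θs : Fin M → Θ => Real.log ((1 / (M : ℝ)) * ∑ m : Fin M, p (θs m)))
      (Measure.pi fun _ : Fin M => q))
    (hintM' : Integrable
      (fun θs : Fin (M + 1) → Θ =>
        Real.log ((1 / ((M : ℝ) + 1)) * ∑ m : Fin (M + 1), p (θs m)))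
      (Measure.pi fun _ : Fin (M + 1) => q)) :
    ∫ θs : Fin (M + 1) → Θ, -Real.log ((1 / ((M : ℝ) + 1)) * ∑ m : Fin (M + 1), p (θs m))
        ∂(Measure.pi fun _ : Fin (M + 1) => q)
      ≤ ∫ θs : Fin M → Θ, -Real.log ((1 / (M : ℝ)) * ∑ m : Fin M, p (θs m))
          ∂(Measure.pi fun _ : Fin M => q) :=
  multisample_objective_antitone_general q M hM p hpos hintM hintM'
end

section
/- For i.i.d. θ^(1),...,θ^(M) ~ q and positive integrable p with p log p integrable, the expected multi-sample objective satisfies the sandwich: -log E_q[p(θ)] ≤ E[-log((1/M)Σ_m p(θ^(m)))] ≤ E_q[-log p(θ)]; moreover at M = 1 the upper bound is an equality. -/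
/-!
Both inequalities are Jensen's inequality for the concave logarithm. For the lower bound it is
applied to the sample mean `(1/M) Σ p(θₘ)` under the product measure, whose expectation is `E_q[p]`.
For the upper bound it is applied pointwise to the uniform average over the `M` samples, giving
`(1/M) Σ log p(θₘ) ≤ log ((1/M) Σ p(θₘ))`, and the left side has expectation `E_q[log p]`.
-/

open MeasureTheory

open Real in
theorem integral_log_le_log_integral {α : Type*} [MeasurableSpace α] {μ : Measure α}
    [IsProbabilityMeasure μ] {f : α → ℝ} (hf_pos : ∀ᵐ x ∂μ, 0 < f x) (hf : Integrable f μ)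
    (hlog : Integrable (fun x => log (f x)) μ) :
    ∫ x, log (f x) ∂μ ≤ log (∫ x, f x ∂μ) := by
  set a := ∫ x, f x ∂μ
  have ha : 0 < a := by
    refine (integral_pos_iff_support_of_nonneg_ae (hf_pos.mono fun _ hx => hx.le) hf).2 ?_
    refine pos_iff_ne_zero.2 fun h => ?_
    obtain ⟨x, hx, hx0⟩ := (hf_pos.and (measure_eq_zero_iff_ae_notMem.1 h)).exists
    exact hx0 hx.ne'
  -- `ConcaveOn.le_map_integral` needs a closed domain, which `log` lacks: integrate the
  -- tangent line of `log` at the mean instead.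
  have log_le_tangent : ∀ y, 0 < y → log y ≤ log a + (y / a - 1) := fun y hy => by
    have := log_le_sub_one_of_pos (div_pos hy ha)
    rw [log_div hy.ne' ha.ne'] at this
    linarith
  have hf_div : Integrable (fun x => f x / a - 1) μ := (hf.div_const a).sub (integrable_const 1)
  calc ∫ x, log (f x) ∂μ ≤ ∫ x, log a + (f x / a - 1) ∂μ :=
        integral_mono_ae hlog ((integrable_const _).add hf_div)
          (hf_pos.mono fun x hx => log_le_tangent (f x) hx)
    _ = log a := by
        rw [integral_add (integrable_const _) hf_div, integral_sub (hf.div_const a)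
          (integrable_const 1), integral_div, div_self ha.ne']
        simp

open Real in
theorem average_log_le_log_average {ι : Type*} [Fintype ι] [Nonempty ι] {x : ι → ℝ}
    (hx : ∀ i, 0 < x i) :
    1 / (Fintype.card ι : ℝ) * ∑ i, log (x i) ≤ log (1 / (Fintype.card ι : ℝ) * ∑ i, x i) := by
  have hw : ∑ _i : ι, 1 / (Fintype.card ι : ℝ) = 1 := by simp
  simpa only [Finset.mul_sum, smul_eq_mul] using
    strictConcaveOn_log_Ioi.concaveOn.le_map_sum (t := Finset.univ) (fun _ _ => by positivity)
      hw fun i _ => hx i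

section SampleMean

variable {ι Θ : Type*} [Fintype ι] [MeasurableSpace Θ] {q : Measure Θ} [IsProbabilityMeasure q]
  {g : Θ → ℝ}

theorem integrable_average_comp_eval (hg : Integrable g q) :
    Integrable (fun θs : ι → Θ => 1 / (Fintype.card ι : ℝ) * ∑ i, g (θs i))
      (Measure.pi fun _ => q) :=
  (integrable_finsetSum _ fun _ _ => integrable_comp_eval hg).const_mul _

theorem integral_average_comp_eval [Nonempty ι] (hg : Integrable g q) :
    ∫ θs : ι → Θ, 1 / (Fintype.card ι : ℝ) * ∑ i, g (θs i) ∂(Measure.pi fun _ => q)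
      = ∫ θ, g θ ∂q := by
  rw [integral_const_mul, integral_finsetSum _ fun _ _ => integrable_comp_eval hg]
  simp only [integral_comp_eval (μ := fun _ : ι => q) hg.aestronglyMeasurable, Finset.sum_const,
    Finset.card_univ, nsmul_eq_mul]
  field_simp

end SampleMean

theorem multisample_sandwich_general {Θ : Type*} [MeasurableSpace Θ]
    (q : Measure Θ) [IsProbabilityMeasure q] (M : ℕ) (hM : 1 ≤ M)
    (p : Θ → ℝ) (hpos : ∀ θ, 0 < p θ) (hint : Integrable p q)
    (hlog : Integrable (fun θ => Real.log (p θ)) q)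
    (hintM : Integrable
      (fun θs : Fin M → Θ => Real.log ((1 / (M : ℝ)) * ∑ m : Fin M, p (θs m)))
      (Measure.pi fun _ : Fin M => q)) :
    (-Real.log (∫ θ, p θ ∂q)
        ≤ ∫ θs : Fin M → Θ, -Real.log ((1 / (M : ℝ)) * ∑ m : Fin M, p (θs m))
            ∂(Measure.pi fun _ : Fin M => q)) ∧
    (∫ θs : Fin M → Θ, -Real.log ((1 / (M : ℝ)) * ∑ m : Fin M, p (θs m))
          ∂(Measure.pi fun _ : Fin M => q)
        ≤ ∫ θ, -Real.log (p θ) ∂q) ∧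
    (M = 1 →
      ∫ θs : Fin M → Θ, -Real.log ((1 / (M : ℝ)) * ∑ m : Fin M, p (θs m))
          ∂(Measure.pi fun _ : Fin M => q)
        = ∫ θ, -Real.log (p θ) ∂q) := by
  have : NeZero M := ⟨by omega⟩
  have hmean_pos (θs : Fin M → Θ) : 0 < 1 / (M : ℝ) * ∑ m, p (θs m) := by
    have : 0 < ∑ m, p (θs m) := Finset.sum_pos (fun m _ => hpos (θs m)) Finset.univ_nonempty
    positivity
  have hmean_int {g : Θ → ℝ} (hg : Integrable g q) :
      Integrable (fun θs : Fin M → Θ => 1 / (M : ℝ) * ∑ m, g (θs m)) (Measure.pi fun _ => q) := by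
    simpa only [Fintype.card_fin] using integrable_average_comp_eval (ι := Fin M) hg
  have hmean_integral {g : Θ → ℝ} (hg : Integrable g q) :
      ∫ θs : Fin M → Θ, 1 / (M : ℝ) * ∑ m, g (θs m) ∂(Measure.pi fun _ => q) = ∫ θ, g θ ∂q := by
    simpa only [Fintype.card_fin] using integral_average_comp_eval (ι := Fin M) hg
  simp only [integral_neg, neg_le_neg_iff]
  refine ⟨?_, ?_, fun hM1 => ?_⟩
  · simpa only [hmean_integral hint] using
      integral_log_le_log_integral (.of_forall hmean_pos) (hmean_int hint) hintM
  · rw [← hmean_integral hlog]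
    refine integral_mono (hmean_int hlog) hintM fun θs => ?_
    simpa only [Fintype.card_fin] using average_log_le_log_average fun m => hpos (θs m)
  · subst hM1
    simpa using integral_comp_eval (μ := fun _ : Fin 1 => q) (i := 0) hlog.aestronglyMeasurable

/-- Sandwich for the expected multi-sample objective: the DLM loss lower-bounds it and the
ELBO loss upper-bounds it; at `M = 1` the upper bound is an equality. -/
theorem multisample_sandwich {Θ : Type*} [MeasurableSpace Θ]
    (q : Measure Θ) [IsProbabilityMeasure q] (M : ℕ) (hM : 1 ≤ M)
    (p : Θ → ℝ) (hmeas : Measurable p) (hpos : ∀ θ, 0 < p θ) (hint : Integrable p q)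
    (hplogp : Integrable (fun θ => p θ * Real.log (p θ)) q)
    (hlog : Integrable (fun θ => Real.log (p θ)) q)
    (hintM : Integrable
      (fun θs : Fin M → Θ => Real.log ((1 / (M : ℝ)) * ∑ m : Fin M, p (θs m)))
      (Measure.pi fun _ : Fin M => q)) :
    (-Real.log (∫ θ, p θ ∂q)
        ≤ ∫ θs : Fin M → Θ, -Real.log ((1 / (M : ℝ)) * ∑ m : Fin M, p (θs m))
            ∂(Measure.pi fun _ : Fin M => q)) ∧
    (∫ θs : Fin M → Θ, -Real.log ((1 / (M : ℝ)) * ∑ m : Fin M, p (θs m))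
          ∂(Measure.pi fun _ : Fin M => q)
        ≤ ∫ θ, -Real.log (p θ) ∂q) ∧
    (M = 1 →
      ∫ θs : Fin M → Θ, -Real.log ((1 / (M : ℝ)) * ∑ m : Fin M, p (θs m))
          ∂(Measure.pi fun _ : Fin M => q)
        = ∫ θ, -Real.log (p θ) ∂q) :=
  multisample_sandwich_general q M hM p hpos hint hlog hintM
end

section
/- Let X₁,...,X_M be i.i.d. random variables with values in [c, 1] for some c ∈ (0,1), with mean μ = E[X₁]. Then 0 ≤ E[-log((1/M)Σ_m X_m)] - (-log μ) ≤ Var(X₁)/(2c²M), so the bias of the M-sample DLM estimator vanishes at rate O(1/M). -/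
/-!
Jensen's inequality for the convex function `-log` gives the lower bound. For the upper bound,
`-log` has second derivative `1/t² ≤ 1/c²` on `[c, ∞)`, so the sample mean `S` satisfies
`-log S ≤ -log μ - (S - μ)/μ + (S - μ)²/(2c²)` pointwise. Taking expectations kills the linear
term, and the quadratic one is `Var(S)/(2c²) = Var(X₁)/(2c²M)` because the coordinates of a product
measure are independent.
-/

open MeasureTheory Real Set ProbabilityTheory

theorem ConvexOn.add_mul_sub_le_of_hasDerivAt {S : Set ℝ} {f : ℝ → ℝ} {f' x y : ℝ}
    (hf : ConvexOn ℝ S f) (hx : x ∈ S) (hy : y ∈ S) (hd : HasDerivAt f f' x) :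
    f x + f' * (y - x) ≤ f y := by
  rcases lt_trichotomy x y with hxy | rfl | hyx
  · have h := hf.le_slope_of_hasDerivAt hx hy hxy hd
    rw [slope_def_field, le_div_iff₀ (sub_pos.2 hxy)] at h
    linarith
  · simp
  · have h := hf.slope_le_of_hasDerivAt hy hx hyx hd
    rw [slope_def_field, div_le_iff₀ (sub_pos.2 hyx)] at h
    linarith

/-- `K t² / 2 - f t` is convex, hence lies above its tangent lines. -/
theorem le_add_mul_sub_add_sq_of_deriv2_le {D : Set ℝ} (hD : Convex ℝ D) {f f' f'' : ℝ → ℝ}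
    {K : ℝ} (hf : ∀ x ∈ D, HasDerivAt f (f' x) x) (hf' : ∀ x ∈ D, HasDerivAt f' (f'' x) x)
    (hK : ∀ x ∈ D, f'' x ≤ K) {x y : ℝ} (hx : x ∈ D) (hy : y ∈ D) :
    f y ≤ f x + f' x * (y - x) + K / 2 * (y - x) ^ 2 := by
  have hg : ∀ t ∈ D, HasDerivAt (fun t => K / 2 * t ^ 2 - f t) (K * t - f' t) t := fun t ht =>
    (((hasDerivAt_pow 2 t).const_mul (K / 2)).fun_sub (hf t ht)).congr_deriv (by norm_num; ring)
  have hconv : ConvexOn ℝ D (fun t => K / 2 * t ^ 2 - f t) := by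
    refine convexOn_of_hasDerivWithinAt2_nonneg hD
      (fun t ht => (hg t ht).continuousAt.continuousWithinAt)
      (fun t ht => (hg t (interior_subset ht)).hasDerivWithinAt)
      (fun t ht => (((hasDerivAt_id t).const_mul K).sub
        (hf' t (interior_subset ht))).hasDerivWithinAt) fun t ht => ?_
    have := hK t (interior_subset ht)
    simp only [mul_one]
    linarith
  linear_combination hconv.add_mul_sub_le_of_hasDerivAt hx hy (hg x hx)

theorem neg_log_le_tangent_add_sq {c m t : ℝ} (hc : 0 < c) (hm : c ≤ m) (ht : c ≤ t) :
    -log t ≤ -log m + -m⁻¹ * (t - m) + 1 / (2 * c ^ 2) * (t - m) ^ 2 := by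
  have hpos : ∀ x ∈ Ici c, 0 < x := fun x hx => hc.trans_le hx
  have h := le_add_mul_sub_add_sq_of_deriv2_le (convex_Ici c) (f := fun x => -log x)
    (f' := fun x => -x⁻¹) (f'' := fun x => (x ^ 2)⁻¹) (K := (c ^ 2)⁻¹)
    (fun x hx => (hasDerivAt_log (hpos x hx).ne').neg)
    (fun x hx => by simpa using (hasDerivAt_inv (hpos x hx).ne').fun_neg)
    (fun x hx => inv_anti₀ (by positivity) (pow_le_pow_left₀ hc.le hx 2)) hm ht
  convert h using 2
  ring

theorem integral_le_add_mul_variance_of_le {Ω : Type*} [MeasurableSpace Ω] {P : Measure Ω}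
    [IsProbabilityMeasure P] {Y Z : Ω → ℝ} (hY : MemLp Y 2 P) (hZ : Integrable Z P) {a b k : ℝ}
    (h : ∀ ω, Z ω ≤ a + b * (Y ω - P[Y]) + k * (Y ω - P[Y]) ^ 2) :
    P[Z] ≤ a + k * Var[Y; P] := by
  have hYi : Integrable Y P := hY.integrable one_le_two
  have hsq : Integrable (fun ω => (Y ω - P[Y]) ^ 2) P := (hY.sub (memLp_const _)).integrable_sq
  have hcen : Integrable (fun ω => Y ω - P[Y]) P := hYi.sub (integrable_const _)
  have hlin : Integrable (fun ω => a + b * (Y ω - P[Y])) P :=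
    (integrable_const a).add (hcen.const_mul b)
  calc P[Z] ≤ ∫ ω, (a + b * (Y ω - P[Y]) + k * (Y ω - P[Y]) ^ 2) ∂P :=
        integral_mono (f := Z) hZ (hlin.add (hsq.const_mul k)) h
    _ = a + k * Var[Y; P] := by
      rw [integral_add hlin (hsq.const_mul k), integral_add (integrable_const a)
        (hcen.const_mul b), integral_const_mul, integral_const_mul,
        integral_sub hYi (integrable_const _), variance_eq_integral hY.aestronglyMeasurable.aemeasurable]
      simp

theorem Convex.one_div_mul_sum_mem {s : Set ℝ} (hs : Convex ℝ s) {M : ℕ} (hM : 0 < M)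
    {x : Fin M → ℝ} (hx : ∀ m, x m ∈ s) : 1 / (M : ℝ) * ∑ m, x m ∈ s := by
  rw [Finset.mul_sum]
  exact hs.sum_mem (fun _ _ => by positivity) (by simp [hM.ne']) fun m _ => hx m

section SampleMean

variable {Θ ι : Type*} [MeasurableSpace Θ] [Fintype ι] {q : Measure Θ} [IsProbabilityMeasure q]
  {X : Θ → ℝ} {M : ℕ}

theorem integral_sum_comp_eval (hX : Integrable X q) :
    ∫ θs : ι → Θ, ∑ i, X (θs i) ∂Measure.pi (fun _ => q) = Fintype.card ι * ∫ θ, X θ ∂q := by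
  rw [integral_finsetSum _ fun i _ => integrable_comp_eval hX]
  simp [integral_comp_eval (μ := fun _ : ι => q) hX.aestronglyMeasurable]

theorem variance_sum_comp_eval (hX : MemLp X 2 q) :
    Var[fun θs : ι → Θ => ∑ i, X (θs i); Measure.pi fun _ => q] = Fintype.card ι * Var[X; q] := by
  have hcoord : ∀ i, MemLp (fun θs : ι → Θ => X (θs i)) 2 (Measure.pi fun _ => q) := fun i =>
    hX.comp_measurePreserving (measurePreserving_eval _ i)
  have hindep := iIndepFun_pi (μ := fun _ : ι => q) fun _ => hX.aestronglyMeasurable.aemeasurable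
  rw [← Finset.sum_fn, IndepFun.variance_sum (fun i _ => hcoord i)
    fun i _ j _ hij => hindep.indepFun hij]
  simp [(measurePreserving_eval (fun _ : ι => q) _).variance_fun_comp
    hX.aestronglyMeasurable.aemeasurable]

theorem integral_sampleMean (hM : 0 < M) (hX : Integrable X q) :
    ∫ θs : Fin M → Θ, 1 / (M : ℝ) * ∑ m, X (θs m) ∂Measure.pi (fun _ => q) = ∫ θ, X θ ∂q := by
  rw [integral_const_mul, integral_sum_comp_eval hX, Fintype.card_fin]
  field_simp

theorem variance_sampleMean (hX : MemLp X 2 q) :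
    Var[fun θs : Fin M → Θ => 1 / (M : ℝ) * ∑ m, X (θs m); Measure.pi fun _ => q]
      = Var[X; q] / M := by
  rw [variance_const_mul, variance_sum_comp_eval hX, Fintype.card_fin]
  rcases M.eq_zero_or_pos with rfl | hM
  · simp
  · field_simp

end SampleMean

/-- Quantitative bias of the `M`-sample DLM estimator for i.i.d. values in `[c,1]`:
`0 ≤ E[-log ((1/M) ∑ₘ Xₘ)] + log μ ≤ Var(X₁) / (2 c² M)`. -/
theorem mc_dlm_bias_rate {Θ : Type*} [MeasurableSpace Θ]
    (q : Measure Θ) [IsProbabilityMeasure q] (c : ℝ) (hc : c ∈ Set.Ioo (0 : ℝ) 1)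
    (X : Θ → ℝ) (hX : Measurable X) (hrange : ∀ θ, X θ ∈ Set.Icc c 1)
    (M : ℕ) (hM : 0 < M) :
    0 ≤ (∫ θs : Fin M → Θ, -Real.log ((1 / (M : ℝ)) * ∑ m : Fin M, X (θs m))
          ∂(Measure.pi fun _ : Fin M => q))
        - (-Real.log (∫ θ, X θ ∂q)) ∧
    (∫ θs : Fin M → Θ, -Real.log ((1 / (M : ℝ)) * ∑ m : Fin M, X (θs m))
          ∂(Measure.pi fun _ : Fin M => q))
        - (-Real.log (∫ θ, X θ ∂q))
      ≤ (∫ θ, (X θ - ∫ θ', X θ' ∂q) ^ 2 ∂q) / (2 * c ^ 2 * M) := by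
  set P := Measure.pi fun _ : Fin M => q
  set S : (Fin M → Θ) → ℝ := fun θs => 1 / (M : ℝ) * ∑ m, X (θs m)
  have hSmeas : Measurable S := by fun_prop
  have hSrange (θs) : S θs ∈ Icc c 1 :=
    (convex_Icc c 1).one_div_mul_sum_mem hM fun m => hrange (θs m)
  have hXL2 : MemLp X 2 q := memLp_of_bounded (ae_of_all _ hrange) hX.aestronglyMeasurable 2
  have hSL2 : MemLp S 2 P := memLp_of_bounded (ae_of_all _ hSrange) hSmeas.aestronglyMeasurable 2
  have hmean : P[S] = q[X] := integral_sampleMean hM (hXL2.integrable one_le_two)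
  have hcμ : c ≤ q[X] := (convex_Ici c).integral_mem isClosed_Ici
    (ae_of_all _ fun θ => (hrange θ).1) (hXL2.integrable one_le_two)
  have hlogS : Integrable (fun θs => -log (S θs)) P := by
    refine (memLp_of_bounded (a := 0) (b := -log c) (ae_of_all _ fun θs => ?_)
      (measurable_log.comp hSmeas).neg.aestronglyMeasurable 1).integrable le_rfl
    obtain ⟨hcS, hS1⟩ := hSrange θs
    exact ⟨neg_nonneg.2 (log_nonpos (hc.1.le.trans hcS) hS1), neg_le_neg (log_le_log hc.1 hcS)⟩
  constructor
  · have hconv : ConvexOn ℝ (Ici c) fun t => -log t :=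
      (strictConcaveOn_log_Ioi.concaveOn.subset (Ici_subset_Ioi.2 hc.1) (convex_Ici c)).neg
    have := hconv.map_integral_le (continuousOn_log.mono fun t ht => (hc.1.trans_le ht).ne').neg
      isClosed_Ici (ae_of_all _ fun θs => (hSrange θs).1) (hSL2.integrable one_le_two) hlogS
    rw [hmean] at this
    linarith
  · have := integral_le_add_mul_variance_of_le hSL2 hlogS fun θs =>
      hmean ▸ neg_log_le_tangent_add_sq hc.1 hcμ (hSrange θs).1
    rw [hmean, variance_sampleMean hXL2, variance_eq_integral hX.aemeasurable] at this
    have hquot : 1 / (2 * c ^ 2) * ((∫ θ, (X θ - q[X]) ^ 2 ∂q) / M)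
        = (∫ θ, (X θ - q[X]) ^ 2 ∂q) / (2 * c ^ 2 * M) := by ring
    linarith
end
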